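/- arXiv:1308.6801 — 6 statements merged into one kernel-verified Lean document; each statement's English description precedes it below -/
import Mathlib

section
/- In any crossing-free infinite-backbone labeling of P, if p_i and p_{i+1} are vertically consecutive points of P (i.e., no point of P has y-coordinate strictly between y(p_{i+1}) and y(p_i)), then at most two labels of the labeling have their y-coordinate strictly between y(p_{i+1}) and y(p_i}). -/
/-- In any crossing-free infinite-backbone labeling of `P`, if `p` and `q` are vertically
consecutive points of `P` (with `y q < y p` and no point strictly between), then at most
two labels have their `y`-coordinate strictly between `y q` and `y p`.

Points are indexed by a finite type `ι` with injective `y`-coordinates `yp` and colors `c`;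
labels are indexed by a finite type `Lb` with pairwise distinct `y`-coordinates `y`
(injectivity), distinct from all point `y`-coordinates, colors `col`, and assignment `f`
matching colors and hitting every label.  Crossing-free: for every point `p` and every label
`ℓ' ≠ f p`, `y ℓ'` does not lie strictly between `yp p` and `y (f p)`. -/
theorem stmt0 {ι Lb C : Type*} [Fintype ι] [Fintype Lb]
    (yp : ι → ℝ) (hyp : Function.Injective yp)
    (c : ι → C)
    (y : Lb → ℝ) (hy : Function.Injective y)
    (hdisj : ∀ (ℓ : Lb) (p : ι), y ℓ ≠ yp p)
    (col : Lb → C) (f : ι → Lb)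
    (hcol : ∀ p : ι, col (f p) = c p)
    (hsurj : Function.Surjective f)
    (hcf : ∀ (p : ι) (ℓ' : Lb), ℓ' ≠ f p →
      ¬ (min (yp p) (y (f p)) < y ℓ' ∧ y ℓ' < max (yp p) (y (f p))))
    (p q : ι) (hpq : yp q < yp p)
    (hcons : ∀ r : ι, ¬ (yp q < yp r ∧ yp r < yp p)) :
    {ℓ : Lb | yp q < y ℓ ∧ y ℓ < yp p}.ncard ≤ 2 := by
  classical
  set S : Set Lb := {ℓ : Lb | yp q < y ℓ ∧ y ℓ < yp p} with hS
  set SL : Set Lb := {ℓ ∈ S | ∃ r : ι, f r = ℓ ∧ yp r ≤ yp q} with hSL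
  set SH : Set Lb := {ℓ ∈ S | ∃ r : ι, f r = ℓ ∧ yp p ≤ yp r} with hSH
  have hsub : S ⊆ SL ∪ SH := by
    intro ℓ hl
    obtain ⟨r, hr⟩ := hsurj ℓ
    have := hcons r
    rcases le_or_gt (yp r) (yp q) with h | h
    · exact Or.inl ⟨hl, r, hr, h⟩
    · right
      refine ⟨hl, r, hr, ?_⟩
      by_contra hlt
      exact this ⟨h, lt_of_not_ge hlt⟩
  -- key: two gap labels with witnesses on the same low side coincide
  have keyL : SL.Subsingleton := by
    intro ℓ1 h1 ℓ2 h2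
    by_contra hne
    obtain ⟨hl1, r1, hr1, hlo1⟩ := h1
    obtain ⟨hl2, r2, hr2, hlo2⟩ := h2
    have hyne : y ℓ1 ≠ y ℓ2 := fun h => hne (hy h)
    rcases lt_or_gt_of_ne hyne with h | h
    · refine hcf r2 ℓ1 (by rw [hr2]; exact hne) ⟨?_, ?_⟩
      · rw [hr2]
        exact lt_of_le_of_lt (min_le_left _ _) (lt_of_le_of_lt hlo2 hl1.1)
      · rw [hr2]
        exact lt_of_lt_of_le h (le_max_right _ _)
    · refine hcf r1 ℓ2 (by rw [hr1]; exact fun h' => hne h'.symm) ⟨?_, ?_⟩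
      · rw [hr1]
        exact lt_of_le_of_lt (min_le_left _ _) (lt_of_le_of_lt hlo1 hl2.1)
      · rw [hr1]
        exact lt_of_lt_of_le h (le_max_right _ _)
  have keyH : SH.Subsingleton := by
    intro ℓ1 h1 ℓ2 h2
    by_contra hne
    obtain ⟨hl1, r1, hr1, hhi1⟩ := h1
    obtain ⟨hl2, r2, hr2, hhi2⟩ := h2
    have hyne : y ℓ1 ≠ y ℓ2 := fun h => hne (hy h)
    rcases lt_or_gt_of_ne hyne with h | h
    · refine hcf r1 ℓ2 (by rw [hr1]; exact fun h' => hne h'.symm) ⟨?_, ?_⟩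
      · rw [hr1]
        exact lt_of_le_of_lt (min_le_right _ _) h
      · rw [hr1]
        exact lt_max_of_lt_left (lt_of_lt_of_le hl2.2 hhi1)
    · refine hcf r2 ℓ1 (by rw [hr2]; exact hne) ⟨?_, ?_⟩
      · rw [hr2]
        exact lt_of_le_of_lt (min_le_right _ _) h
      · rw [hr2]
        exact lt_max_of_lt_left (lt_of_lt_of_le hl1.2 hhi2)
  calc S.ncard ≤ (SL ∪ SH).ncard :=
        Set.ncard_le_ncard hsub (Set.toFinite _)
    _ ≤ SL.ncard + SH.ncard := Set.ncard_union_le _ _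
    _ ≤ 1 + 1 := add_le_add ((Set.ncard_le_one (Set.toFinite _)).mpr fun a ha b hb => keyL ha hb) ((Set.ncard_le_one (Set.toFinite _)).mpr fun a ha b hb => keyH ha hb)
    _ = 2 := rfl
end

section
/- In any crossing-free infinite-backbone labeling of P, if p_i and p_{i+1} are vertically consecutive points of P, then every label whose y-coordinate lies strictly between y(p_{i+1}) and y(p_i) has color c(p_i), c(p_{i+1}), c(p_j), or c(p_{j'}), where p_j is the lowest point above p_i whose color differs from c(p_i) (this option being available only if such a point exists) and p_{j'} is the highest point below p_{i+1} whose color differs from c(p_{i+1}) (this option being available only if such a point exists). -/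
/-- Key lemma: if a label `f r` lies below point `p` but its point `r` lies above `p`
with a different color, then the lowest point above `p` with a different color has the
same color as the label. -/
lemma stmt1_key {ι Lb C : Type*} [Fintype ι]
    (yp : ι → ℝ) (hyp : Function.Injective yp)
    (c : ι → C)
    (y : Lb → ℝ) (hy : Function.Injective y)
    (hdisj : ∀ (ℓ : Lb) (p : ι), y ℓ ≠ yp p)
    (col : Lb → C) (f : ι → Lb)
    (hcol : ∀ p : ι, col (f p) = c p)
    (hcf : ∀ (p : ι) (ℓ' : Lb), ℓ' ≠ f p →
      ¬ (min (yp p) (y (f p)) < y ℓ' ∧ y ℓ' < max (yp p) (y (f p))))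
    (p r : ι) (hℓp : y (f r) < yp p) (hrp : yp p < yp r) (hcr : c r ≠ c p) :
    ∃ j : ι, yp p < yp j ∧ c j ≠ c p ∧
      (∀ s : ι, yp p < yp s → yp s < yp j → c s = c p) ∧ col (f r) = c j := by
  classical
  obtain ⟨j, hjS, hjmin⟩ := Finset.exists_min_image
    (Finset.univ.filter fun s => yp p < yp s ∧ c s ≠ c p) yp
    ⟨r, by simp [hrp, hcr]⟩
  simp only [Finset.mem_filter, Finset.mem_univ, true_and] at hjS hjmin
  obtain ⟨hpj, hcj⟩ := hjS
  refine ⟨j, hpj, hcj, fun s hps hsj => ?_, ?_⟩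
  · by_contra hcs
    exact absurd (hjmin s ⟨hps, hcs⟩) (not_le.2 hsj)
  · have hfpr : f p ≠ f r := fun h => hcr (by rw [← hcol r, ← h, hcol])
    have hfpj : f p ≠ f j := fun h => hcj (by rw [← hcol j, ← h, hcol])
    suffices h : f j = f r by rw [← h, hcol]
    by_contra hne
    have hjr : j ≠ r := fun h => hne (by rw [h])
    have hjltr : yp j < yp r :=
      lt_of_le_of_ne (hjmin r ⟨hrp, hcr⟩) (fun h => hjr (hyp h))
    -- Step 1 : y (f r) < y (f p)
    have h1 : y (f r) < y (f p) := by
      rcases lt_or_ge (y (f r)) (y (f p)) with h | h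
      · exact h
      · exfalso
        apply hcf p (f r) hfpr.symm
        have hlt : y (f p) < y (f r) :=
          lt_of_le_of_ne h (fun e => hfpr (hy e))
        exact ⟨(min_le_right _ _).trans_lt hlt, hℓp.trans_le (le_max_left _ _)⟩
    -- Step 2 : yp r < y (f p)
    have h2 : yp r < y (f p) := by
      rcases lt_or_ge (yp r) (y (f p)) with h | h
      · exact h
      · exfalso
        apply hcf r (f p) hfpr
        have hlt : y (f p) < yp r :=
          lt_of_le_of_ne h (fun e => hdisj (f p) r e)
        exact ⟨(min_le_right _ _).trans_lt h1, hlt.trans_le (le_max_left _ _)⟩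
    -- Step 3 : y (f j) not below y (f r)
    have h3 : y (f r) < y (f j) := by
      rcases lt_or_ge (y (f r)) (y (f j)) with h | h
      · exact h
      · exfalso
        apply hcf j (f r) (fun e => hne e.symm)
        have hlt : y (f j) < y (f r) :=
          lt_of_le_of_ne h (fun e => hne (hy e))
        refine ⟨(min_le_right _ _).trans_lt hlt, ?_⟩
        exact (hℓp.trans (hpj.trans_le' le_rfl)).trans_le (le_max_left _ _)
    -- Step 4 : yp r < y (f j)
    have h4 : yp r < y (f j) := by
      rcases lt_or_ge (yp r) (y (f j)) with h | h
      · exact h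
      · exfalso
        apply hcf r (f j) hne
        have hlt : y (f j) < yp r :=
          lt_of_le_of_ne h (fun e => hdisj (f j) r e)
        exact ⟨(min_le_right _ _).trans_lt h3, hlt.trans_le (le_max_left _ _)⟩
    -- Now compare y (f p) and y (f j)
    rcases lt_trichotomy (y (f p)) (y (f j)) with h | h | h
    · apply hcf j (f p) hfpj
      refine ⟨(min_le_left _ _).trans_lt (hjltr.trans h2), h.trans_le (le_max_right _ _)⟩
    · exact hfpj (hy h)
    · apply hcf p (f j) (fun e => hfpj e.symm)
      refine ⟨(min_le_left _ _).trans_lt ((hrp.trans h4)), h.trans_le (le_max_right _ _)⟩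

/-- In any crossing-free infinite-backbone labeling of `P`, if `p` and `q` are vertically
consecutive points (`yp q < yp p`, no point strictly between), then every label whose
`y`-coordinate lies strictly between `yp q` and `yp p` has color `c p`, `c q`,
`c j` where `j` is the lowest point above `p` with color different from `c p`
(if such a point exists), or `c j'` where `j'` is the highest point below `q` with color
different from `c q` (if such a point exists). -/
theorem stmt1 {ι Lb C : Type*} [Fintype ι] [Fintype Lb]
    (yp : ι → ℝ) (hyp : Function.Injective yp)
    (c : ι → C)
    (y : Lb → ℝ) (hy : Function.Injective y)
    (hdisj : ∀ (ℓ : Lb) (p : ι), y ℓ ≠ yp p)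
    (col : Lb → C) (f : ι → Lb)
    (hcol : ∀ p : ι, col (f p) = c p)
    (hsurj : Function.Surjective f)
    (hcf : ∀ (p : ι) (ℓ' : Lb), ℓ' ≠ f p →
      ¬ (min (yp p) (y (f p)) < y ℓ' ∧ y ℓ' < max (yp p) (y (f p))))
    (p q : ι) (hpq : yp q < yp p)
    (hcons : ∀ r : ι, ¬ (yp q < yp r ∧ yp r < yp p)) :
    ∀ ℓ : Lb, yp q < y ℓ → y ℓ < yp p →
      col ℓ = c p ∨ col ℓ = c q ∨
      (∃ j : ι, yp p < yp j ∧ c j ≠ c p ∧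
        (∀ r : ι, yp p < yp r → yp r < yp j → c r = c p) ∧ col ℓ = c j) ∨
      (∃ j' : ι, yp j' < yp q ∧ c j' ≠ c q ∧
        (∀ r : ι, yp j' < yp r → yp r < yp q → c r = c q) ∧ col ℓ = c j') := by
  classical
  intro ℓ hqℓ hℓp
  obtain ⟨r, rfl⟩ := hsurj ℓ
  rw [hcol r]
  by_cases hcp : c r = c p
  · exact Or.inl hcp
  by_cases hcq : c r = c q
  · exact Or.inr (Or.inl hcq)
  have hrp : r ≠ p := fun h => hcp (by rw [h])
  have hrq : r ≠ q := fun h => hcq (by rw [h])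
  have hr : yp r < yp q ∨ yp p < yp r := by
    rcases lt_trichotomy (yp r) (yp q) with h | h | h
    · exact Or.inl h
    · exact absurd (hyp h) hrq
    rcases lt_trichotomy (yp r) (yp p) with h' | h' | h'
    · exact absurd ⟨h, h'⟩ (hcons r)
    · exact absurd (hyp h') hrp
    · exact Or.inr h'
  rcases hr with h | h
  · -- r is below q : use the key lemma with negated coordinates
    right; right; right
    have hcf' : ∀ (p' : ι) (ℓ' : Lb), ℓ' ≠ f p' →
        ¬ (min (-(yp p')) (-(y (f p'))) < -(y ℓ') ∧
           -(y ℓ') < max (-(yp p')) (-(y (f p')))) := by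
      rintro p' ℓ' hne ⟨h1, h2⟩
      rw [min_neg_neg, neg_lt_neg_iff] at h1
      rw [max_neg_neg, neg_lt_neg_iff] at h2
      exact hcf p' ℓ' hne ⟨h2, h1⟩
    obtain ⟨j, hj1, hj2, hj3, hj4⟩ := stmt1_key (fun i => -(yp i))
      (fun a b hab => hyp (neg_injective hab)) c (fun l => -(y l))
      (fun a b hab => hy (neg_injective hab))
      (fun l i e => hdisj l i (neg_injective e)) col f hcol hcf' q r
      (by simpa using hqℓ) (by simpa using h) hcq
    simp only [neg_lt_neg_iff] at hj1
    refine ⟨j, hj1, hj2, fun s hs1 hs2 => hj3 s (by simpa using hs2) (by simpa using hs1),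
      by rw [hcol r] at hj4; exact hj4⟩
  · -- r is above p : use the key lemma directly
    right; right; left
    obtain ⟨j, hj1, hj2, hj3, hj4⟩ := stmt1_key yp hyp c y hy hdisj col f hcol hcf p r
      hℓp h hcp
    rw [hcol r] at hj4
    exact ⟨j, hj1, hj2, hj3, hj4⟩
end

section
/- The minimum number of labels of a crossing-free infinite-backbone labeling of P equals the minimum number of labels of a crossing-free infinite-backbone labeling of the clustered point set C(P); that is, NL(P) = NL(C(P)). -/
/-- A crossing-free infinite-backbone labeling of the point set `P` (points in the plane,
colored by `c`): `L` is the finite set of label `y`-coordinates (pairwise distinct since it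
is a `Finset`), `col` gives the color of the label at each position, and `f` assigns each
point to the `y`-coordinate of its label. -/
def IsCrossingFreeLabeling {C : Type*} (c : ℝ × ℝ → C) (P : Finset (ℝ × ℝ))
    (L : Finset ℝ) (col : ℝ → C) (f : ℝ × ℝ → ℝ) : Prop :=
  (∀ p ∈ P, f p ∈ L) ∧
  (∀ p ∈ P, col (f p) = c p) ∧
  (∀ ℓ ∈ L, ∃ p ∈ P, f p = ℓ) ∧
  (∀ ℓ ∈ L, ∀ p ∈ P, ℓ ≠ p.2) ∧
  (∀ p ∈ P, ∀ ℓ ∈ L, ℓ ≠ f p → ¬ (min p.2 (f p) < ℓ ∧ ℓ < max p.2 (f p)))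

/-- `NL c P` is the minimum number of labels over all crossing-free infinite-backbone
labelings of `P`. -/
noncomputable def NL {C : Type*} (c : ℝ × ℝ → C) (P : Finset (ℝ × ℝ)) : ℕ :=
  sInf {k : ℕ | ∃ L col f, IsCrossingFreeLabeling c P L col f ∧ L.card = k}

/-!
Deleting points never increases `NL`: restrict an optimal labeling. Conversely, let `p` be a
point that is not the top of its run, so the next point `q` above it has the same color.
Squeezing all labels in `[p.2, q.2)` below `p.2`, past the points lying there, preserves the
order of labels and points and hence the labeling; afterwards `p` can join the label of `q`
without crossings. So removing `p` changes neither `NL(P)` nor `C(P)`, and induction on `P`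
reduces `P` to `C(P)`.
-/

open Finset Filter Topology

theorem exists_pos_forall_add_lt (T : Finset ℝ) :
    ∃ ε > 0, ∀ s ∈ T, ∀ t ∈ T, s < t → s + ε < t := by
  have hgap : ∀ s t : ℝ, ∀ᶠ ε in 𝓝[>] (0 : ℝ), s < t → s + ε < t := fun s t => by
    by_cases hst : s < t
    · filter_upwards [nhdsWithin_le_nhds (eventually_lt_nhds (sub_pos.2 hst))] with ε hε
      intro; linarith
    · exact Eventually.of_forall fun _ h => absurd h hst
  have hall : ∀ᶠ ε in 𝓝[>] (0 : ℝ), 0 < ε ∧ ∀ s ∈ T, ∀ t ∈ T, s < t → s + ε < t := by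
    filter_upwards [self_mem_nhdsWithin, (eventually_all_finset T).2 fun s _ =>
      (eventually_all_finset T).2 fun t _ => hgap s t] with ε hε hT
    exact ⟨hε, hT⟩
  exact hall.exists

section Labeling

variable {C : Type*} {c : ℝ × ℝ → C} {P Q : Finset (ℝ × ℝ)} {L : Finset ℝ} {col : ℝ → C}
  {f : ℝ × ℝ → ℝ}

theorem NL_le_card (h : IsCrossingFreeLabeling c P L col f) : NL c P ≤ L.card :=
  Nat.sInf_le ⟨L, col, f, h, rfl⟩

/-- Every point gets its own label just above it, closer than any two points are to each
other. -/
theorem exists_isCrossingFreeLabeling (hinj : Set.InjOn Prod.snd (P : Set (ℝ × ℝ))) :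
    ∃ L col f, IsCrossingFreeLabeling c P L col f := by
  obtain ⟨ε, hε, hgap⟩ := exists_pos_forall_add_lt (P.image Prod.snd)
  have hgap' : ∀ p ∈ P, ∀ q ∈ P, p.2 < q.2 → p.2 + ε < q.2 := fun p hp q hq =>
    hgap _ (mem_image_of_mem _ hp) _ (mem_image_of_mem _ hq)
  set g : ℝ × ℝ → ℝ := fun p => p.2 + ε
  have hg : Set.InjOn g P := fun p hp q hq h => hinj hp hq (add_right_cancel h)
  refine ⟨P.image g, c ∘ Function.invFunOn g P, g, fun p hp => mem_image_of_mem g hp,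
    fun p hp => congrArg c (hg.leftInvOn_invFunOn hp), fun ℓ hℓ => by simpa using hℓ, ?_, ?_⟩
  · simp only [mem_image, forall_exists_index, and_imp, forall_apply_eq_imp_iff₂]
    intro q hq r hr (hqr : q.2 + ε = r.2)
    linarith [hgap' q hq r hr (by linarith)]
  · simp only [mem_image, forall_exists_index, and_imp, forall_apply_eq_imp_iff₂]
    intro p hp q hq hne ⟨hlo, hhi⟩
    simp only [g, min_eq_left (le_add_of_nonneg_right hε.le),
      max_eq_right (le_add_of_nonneg_right hε.le)] at hlo hhi hne
    rcases lt_trichotomy q.2 p.2 with hlt | heq | hlt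
    · linarith [hgap' q hq p hp hlt]
    · exact hne (by rw [heq])
    · linarith

theorem exists_isCrossingFreeLabeling_card_eq_NL (hinj : Set.InjOn Prod.snd (P : Set (ℝ × ℝ))) :
    ∃ L col f, IsCrossingFreeLabeling c P L col f ∧ L.card = NL c P := by
  obtain ⟨L, col, f, h⟩ := exists_isCrossingFreeLabeling (c := c) hinj
  exact Nat.sInf_mem (s := {k | ∃ L col f, IsCrossingFreeLabeling c P L col f ∧ L.card = k})
    ⟨L.card, L, col, f, h, rfl⟩

theorem IsCrossingFreeLabeling.restrict (h : IsCrossingFreeLabeling c P L col f) (hQP : Q ⊆ P) :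
    IsCrossingFreeLabeling c Q (Q.image f) col f := by
  obtain ⟨h₁, h₂, -, h₄, h₅⟩ := h
  have hL : Q.image f ⊆ L := image_subset_iff.2 fun p hp => h₁ p (hQP hp)
  refine ⟨fun p hp => mem_image_of_mem f hp, fun p hp => h₂ p (hQP hp),
    fun ℓ hℓ => by simpa using hℓ, fun ℓ hℓ p hp => h₄ ℓ (hL hℓ) p (hQP hp),
    fun p hp ℓ hℓ => h₅ p (hQP hp) ℓ (hL hℓ)⟩

theorem NL_mono (hinj : Set.InjOn Prod.snd (P : Set (ℝ × ℝ))) (hQP : Q ⊆ P) :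
    NL c Q ≤ NL c P := by
  obtain ⟨L, col, f, h, hcard⟩ := exists_isCrossingFreeLabeling_card_eq_NL (c := c) hinj
  calc NL c Q ≤ (Q.image f).card := NL_le_card (h.restrict hQP)
    _ ≤ L.card := card_le_card (image_subset_iff.2 fun p hp => h.1 p (hQP hp))
    _ = NL c P := hcard

theorem IsCrossingFreeLabeling.map {θ : ℝ → ℝ} (h : IsCrossingFreeLabeling c P L col f)
    (hθ : StrictMono θ) (hfix : ∀ p ∈ P, θ p.2 = p.2) :
    IsCrossingFreeLabeling c P (L.image θ) (col ∘ Function.invFun θ) (θ ∘ f) := by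
  obtain ⟨h₁, h₂, h₃, h₄, h₅⟩ := h
  refine ⟨fun p hp => mem_image_of_mem θ (h₁ p hp), fun p hp => ?_, ?_, ?_, ?_⟩
  · simp only [Function.comp_apply, Function.leftInverse_invFun hθ.injective _, h₂ p hp]
  · simp only [mem_image, forall_exists_index, and_imp, forall_apply_eq_imp_iff₂]
    intro ℓ hℓ
    obtain ⟨p, hp, rfl⟩ := h₃ ℓ hℓ
    exact ⟨p, hp, rfl⟩
  · simp only [mem_image, forall_exists_index, and_imp, forall_apply_eq_imp_iff₂]
    intro ℓ hℓ p hp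
    rw [← hfix p hp]
    exact hθ.injective.ne (h₄ ℓ hℓ p hp)
  · simp only [mem_image, forall_exists_index, and_imp, forall_apply_eq_imp_iff₂]
    intro p hp ℓ hℓ hne
    rw [Function.comp_apply, ← hfix p hp, ← hθ.monotone.map_min, ← hθ.monotone.map_max,
      hθ.lt_iff_lt, hθ.lt_iff_lt]
    exact h₅ p hp ℓ hℓ fun h => hne (by rw [h]; rfl)

end Labeling

/-- The jump at `b` is upwards when `a < b`, so this map is strictly monotone. -/
noncomputable def squeeze (ζ a b y : ℝ) : ℝ :=
  if y ∈ Set.Ioo ζ b then ζ + (y - ζ) * ((a - ζ) / (b - ζ)) else y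

section Squeeze

variable {ζ a b y : ℝ}

theorem squeeze_of_mem (hy : y ∈ Set.Ioo ζ b) (hζa : ζ < a) (hab : a < b) :
    ζ < squeeze ζ a b y ∧ squeeze ζ a b y < a := by
  have hk : (a - ζ) / (b - ζ) * (b - ζ) = a - ζ := div_mul_cancel₀ _ (by linarith)
  have hk0 : 0 < (a - ζ) / (b - ζ) := div_pos (by linarith) (by linarith)
  rw [squeeze, if_pos hy]
  constructor <;> nlinarith [hy.1, hy.2]

theorem squeeze_of_not_mem (hy : y ∉ Set.Ioo ζ b) : squeeze ζ a b y = y := by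
  rw [squeeze, if_neg hy]

theorem squeeze_strictMono (hζa : ζ < a) (hab : a < b) : StrictMono (squeeze ζ a b) := by
  have hk0 : 0 < (a - ζ) / (b - ζ) := div_pos (by linarith) (by linarith)
  intro y z hyz
  by_cases hy : y ∈ Set.Ioo ζ b <;> by_cases hz : z ∈ Set.Ioo ζ b
  · rw [squeeze, if_pos hy, squeeze, if_pos hz]
    nlinarith
  · have := squeeze_of_mem hy hζa hab
    rw [squeeze_of_not_mem hz]
    simp only [Set.mem_Ioo, not_and_or, not_lt] at hz
    rcases hz with hz | hz <;> linarith [hy.1]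
  · have := squeeze_of_mem hz hζa hab
    rw [squeeze_of_not_mem hy]
    simp only [Set.mem_Ioo, not_and_or, not_lt] at hy
    rcases hy with hy | hy <;> linarith [hz.2]
  · rwa [squeeze_of_not_mem hy, squeeze_of_not_mem hz]

theorem squeeze_not_mem_Ico (hζa : ζ < a) (hab : a < b) :
    squeeze ζ a b y ∉ Set.Ico a b := by
  by_cases hy : y ∈ Set.Ioo ζ b
  · exact fun h => (squeeze_of_mem hy hζa hab).2.not_ge h.1
  · rw [squeeze_of_not_mem hy]
    simp only [Set.mem_Ioo, not_and_or, not_lt] at hy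
    rintro ⟨h₁, h₂⟩
    rcases hy with hy | hy <;> linarith

end Squeeze

section Insert

variable {C : Type*} {c : ℝ × ℝ → C} {P : Finset (ℝ × ℝ)} {L : Finset ℝ} {col : ℝ → C}
  {f : ℝ × ℝ → ℝ} {p q : ℝ × ℝ}

theorem IsCrossingFreeLabeling.insert_below (h : IsCrossingFreeLabeling c P L col f)
    (hq : q ∈ P) (hpq : p.2 < q.2) (hc : c p = c q) (hP : ∀ r ∈ P, r.2 ∉ Set.Ico p.2 q.2)
    (hL : ∀ ℓ ∈ L, ℓ ∉ Set.Ico p.2 q.2) :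
    IsCrossingFreeLabeling c (insert p P) L col (Function.update f p (f q)) := by
  obtain ⟨h₁, h₂, h₃, h₄, h₅⟩ := h
  have hne : ∀ r ∈ P, r ≠ p := fun r hr hrp => hP r hr (by rw [hrp]; exact ⟨le_rfl, hpq⟩)
  have hupd : ∀ r ∈ P, Function.update f p (f q) r = f r := fun r hr =>
    Function.update_of_ne (hne r hr) _ _
  simp only [IsCrossingFreeLabeling, forall_mem_insert, Function.update_self]
  refine ⟨⟨h₁ q hq, fun r hr => hupd r hr ▸ h₁ r hr⟩,
    ⟨(h₂ q hq).trans hc.symm, fun r hr => hupd r hr ▸ h₂ r hr⟩,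
    fun ℓ hℓ => ?_, fun ℓ hℓ => ⟨fun h => hL ℓ hℓ ⟨h.ge, h ▸ hpq⟩, h₄ ℓ hℓ⟩,
    ⟨fun ℓ hℓ hℓq => ?_, fun r hr => hupd r hr ▸ h₅ r hr⟩⟩
  · obtain ⟨r, hr, rfl⟩ := h₃ ℓ hℓ
    exact ⟨r, mem_insert_of_mem hr, hupd r hr⟩
  · -- `f q` lies outside `[p.2, q.2]`, so the leader from `p` to `f q` is that of `q`
    -- extended by the label-free interval `[p.2, q.2)`.
    have hℓ_q := h₅ q hq ℓ hℓ hℓq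
    have hℓ_gap := hL ℓ hℓ
    have hfq_gap := hL (f q) (h₁ q hq)
    have hℓ_ne := h₄ ℓ hℓ q hq
    have hfq_ne := h₄ (f q) (h₁ q hq) q hq
    grind

/-- Labels in `[p.2, q.2)` are first squeezed below `p.2`, past all points of `P` there. -/
theorem NL_insert_le (hinj : Set.InjOn Prod.snd (P : Set (ℝ × ℝ))) (hq : q ∈ P)
    (hpq : p.2 < q.2) (hc : c p = c q) (hP : ∀ r ∈ P, r.2 ∉ Set.Ico p.2 q.2) :
    NL c (insert p P) ≤ NL c P := by
  obtain ⟨L, col, f, h, hcard⟩ := exists_isCrossingFreeLabeling_card_eq_NL (c := c) hinj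
  obtain ⟨ε, hε, hgap⟩ := exists_pos_forall_add_lt (insert p.2 (P.image Prod.snd))
  have hζ : p.2 - ε < p.2 := by linarith
  have hfix : ∀ r ∈ P, squeeze (p.2 - ε) p.2 q.2 r.2 = r.2 := by
    refine fun r hr => squeeze_of_not_mem fun ⟨h₁, h₂⟩ => ?_
    rcases lt_or_ge r.2 p.2 with hrp | hrp
    · linarith [hgap _ (mem_insert_of_mem (mem_image_of_mem _ hr)) _ (mem_insert_self _ _) hrp]
    · exact hP r hr ⟨hrp, h₂⟩
  have h' := (h.map (squeeze_strictMono hζ hpq) hfix).insert_below hq hpq hc hP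
    (by simpa using fun _ _ => squeeze_not_mem_Ico hζ hpq)
  calc NL c (insert p P) ≤ (L.image (squeeze (p.2 - ε) p.2 q.2)).card := NL_le_card h'
    _ ≤ L.card := card_image_le
    _ = NL c P := hcard

end Insert

def IsNextAbove (P : Finset (ℝ × ℝ)) (p q : ℝ × ℝ) : Prop :=
  q ∈ P ∧ p.2 < q.2 ∧ ∀ r ∈ P, ¬ (p.2 < r.2 ∧ r.2 < q.2)

def HasSameColorNext {C : Type*} (c : ℝ × ℝ → C) (P : Finset (ℝ × ℝ)) (p : ℝ × ℝ) : Prop :=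
  ∃ q, IsNextAbove P p q ∧ c q = c p

/-- `CP` is the clustered point set `C(P)`. -/
def IsClusterTops {C : Type*} (c : ℝ × ℝ → C) (P CP : Finset (ℝ × ℝ)) : Prop :=
  ∀ p, p ∈ CP ↔ p ∈ P ∧ ¬ HasSameColorNext c P p

section Clusters

variable {C : Type*} {c : ℝ × ℝ → C} {P CP : Finset (ℝ × ℝ)} {p q r s : ℝ × ℝ}

theorem IsNextAbove.ne (h : IsNextAbove P p q) : q ≠ p :=
  ne_of_apply_ne Prod.snd h.2.1.ne'

theorem IsNextAbove.unique (hinj : Set.InjOn Prod.snd (P : Set (ℝ × ℝ)))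
    (hq : IsNextAbove P p q) (hs : IsNextAbove P p s) : q = s := by
  refine hinj hq.1 hs.1 ?_
  rcases lt_trichotomy q.2 s.2 with h | h | h
  · exact absurd ⟨hq.2.1, h⟩ (hs.2.2 q hq.1)
  · exact h
  · exact absurd ⟨hs.2.1, h⟩ (hq.2.2 s hs.1)

theorem IsNextAbove.erase (h : IsNextAbove P r s) (hsp : s ≠ p) :
    IsNextAbove (P.erase p) r s :=
  ⟨mem_erase.2 ⟨hsp, h.1⟩, h.2.1, fun t ht => h.2.2 t (mem_of_mem_erase ht)⟩

theorem IsNextAbove.erase_trans (hinj : Set.InjOn Prod.snd (P : Set (ℝ × ℝ)))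
    (hp : p ∈ P) (hrp : IsNextAbove P r p) (hpq : IsNextAbove P p q) :
    IsNextAbove (P.erase p) r q := by
  refine ⟨mem_erase.2 ⟨hpq.ne, hpq.1⟩, hrp.2.1.trans hpq.2.1, ?_⟩
  rintro t ht ⟨hrt, htq⟩
  obtain ⟨htp, htP⟩ := mem_erase.1 ht
  rcases lt_trichotomy t.2 p.2 with h | h | h
  · exact hrp.2.2 t htP ⟨hrt, h⟩
  · exact htp (hinj htP hp h)
  · exact hpq.2.2 t htP ⟨h, htq⟩

theorem IsNextAbove.of_erase (h : IsNextAbove (P.erase p) r s)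
    (hrps : ¬ (r.2 < p.2 ∧ p.2 < s.2)) : IsNextAbove P r s := by
  refine ⟨mem_of_mem_erase h.1, h.2.1, fun t ht => ?_⟩
  by_cases htp : t = p
  · exact htp ▸ hrps
  · exact h.2.2 t (mem_erase.2 ⟨htp, ht⟩)

theorem IsNextAbove.split_of_erase (h : IsNextAbove (P.erase p) r s) (hp : p ∈ P)
    (hrp : r.2 < p.2) (hps : p.2 < s.2) : IsNextAbove P r p ∧ IsNextAbove P p s := by
  have hgap : ∀ t ∈ P, t.2 ≠ p.2 → ¬ (r.2 < t.2 ∧ t.2 < s.2) := fun t ht htp =>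
    h.2.2 t (mem_erase.2 ⟨fun e => htp (e ▸ rfl), ht⟩)
  exact ⟨⟨hp, hrp, fun t ht ⟨h₁, h₂⟩ => hgap t ht h₂.ne ⟨h₁, h₂.trans hps⟩⟩,
    ⟨mem_of_mem_erase h.1, hps, fun t ht ⟨h₁, h₂⟩ => hgap t ht h₁.ne' ⟨hrp.trans h₁, h₂⟩⟩⟩

theorem hasSameColorNext_erase_iff (hinj : Set.InjOn Prod.snd (P : Set (ℝ × ℝ)))
    (hp : p ∈ P) (hpq : IsNextAbove P p q) (hc : c q = c p) :
    HasSameColorNext c (P.erase p) r ↔ HasSameColorNext c P r := by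
  constructor
  · rintro ⟨s, hrs, hcs⟩
    by_cases hrps : r.2 < p.2 ∧ p.2 < s.2
    · obtain ⟨hrp, hps⟩ := hrs.split_of_erase hp hrps.1 hrps.2
      exact ⟨p, hrp, by rw [← hc, hpq.unique hinj hps, hcs]⟩
    · exact ⟨s, hrs.of_erase hrps, hcs⟩
  · rintro ⟨s, hrs, hcs⟩
    by_cases hsp : s = p
    · subst hsp
      exact ⟨q, hrs.erase_trans hinj hp hpq, hc.trans hcs⟩
    · exact ⟨s, hrs.erase hsp, hcs⟩

theorem IsClusterTops.erase (hinj : Set.InjOn Prod.snd (P : Set (ℝ × ℝ)))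
    (hCP : IsClusterTops c P CP) (hp : p ∈ P) (hpq : IsNextAbove P p q) (hc : c q = c p) :
    IsClusterTops c (P.erase p) CP := by
  intro r
  rw [hCP r, mem_erase, hasSameColorNext_erase_iff hinj hp hpq hc]
  by_cases hrp : r = p
  · subst hrp
    simpa using fun _ => ⟨q, hpq, hc⟩
  · simp [hrp]

theorem NL_erase_eq (hinj : Set.InjOn Prod.snd (P : Set (ℝ × ℝ))) (hp : p ∈ P)
    (hpq : IsNextAbove P p q) (hc : c q = c p) : NL c (P.erase p) = NL c P := by
  refine le_antisymm (NL_mono hinj (erase_subset p P)) ?_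
  have hgap : ∀ r ∈ P.erase p, r.2 ∉ Set.Ico p.2 q.2 := by
    rintro r hr ⟨hpr, hrq⟩
    obtain ⟨hrp, hrP⟩ := mem_erase.1 hr
    rcases hpr.lt_or_eq with hpr | hpr
    · exact hpq.2.2 r hrP ⟨hpr, hrq⟩
    · exact hrp (hinj hrP hp hpr.symm)
  calc NL c P = NL c (insert p (P.erase p)) := by rw [insert_erase hp]
    _ ≤ NL c (P.erase p) := NL_insert_le (hinj.mono (erase_subset p P))
        (mem_erase.2 ⟨hpq.ne, hpq.1⟩) hpq.2.1 hc.symm hgap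

theorem NL_eq_of_isClusterTops (hinj : Set.InjOn Prod.snd (P : Set (ℝ × ℝ)))
    (hCP : IsClusterTops c P CP) : NL c P = NL c CP := by
  induction P using Finset.strongInduction with
  | H P ih =>
    by_cases hP : ∃ p ∈ P, HasSameColorNext c P p
    · obtain ⟨p, hp, q, hpq, hc⟩ := hP
      rw [← NL_erase_eq hinj hp hpq hc]
      exact ih _ (erase_ssubset hp) (hinj.mono (erase_subset p P)) (hCP.erase hinj hp hpq hc)
    · push Not at hP
      rw [show CP = P from ext fun r => (hCP r).trans ⟨And.left, fun hr => ⟨hr, hP r hr⟩⟩]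

end Clusters

/-- `NL(P) = NL(C(P))` where the clustered point set `CP = C(P)` consists
of the topmost point of each maximal run of vertically consecutive equally-colored points of
`P`; equivalently, `p ∈ C(P)` iff `p ∈ P` and there is no point `q ∈ P` immediately above
`p` (i.e. `q` is above `p` with no point of `P` strictly between) having the same color as
`p`. -/
theorem stmt3 {C : Type*} (c : ℝ × ℝ → C) (P CP : Finset (ℝ × ℝ))
    (hdist : ∀ p ∈ P, ∀ q ∈ P, p.2 = q.2 → p = q)
    (hCP : ∀ p : ℝ × ℝ, p ∈ CP ↔ p ∈ P ∧
      ¬ ∃ q ∈ P, p.2 < q.2 ∧ c q = c p ∧ ∀ r ∈ P, ¬ (p.2 < r.2 ∧ r.2 < q.2)) :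
    NL c P = NL c CP := by
  have hnext : ∀ p, HasSameColorNext c P p ↔
      ∃ q ∈ P, p.2 < q.2 ∧ c q = c p ∧ ∀ r ∈ P, ¬ (p.2 < r.2 ∧ r.2 < q.2) :=
    fun p => exists_congr fun q => by simp only [IsNextAbove]; tauto
  exact NL_eq_of_isClusterTops (fun p hp q hq => hdist p hp q hq) fun p => by
    rw [hCP p, hnext]
end

section
/- Let p_1 > p_2 > ⋯ > p_n be real numbers, let λ ≥ 0, and let S be any nonempty finite set of real numbers. Then there exists a nonempty set S' ⊆ {p_1, …, p_n} with |S'| ≤ |S| such that λ·|S'| + Σ_{i=1}^n min_{y ∈ S'} |y − p_i| ≤ λ·|S| + Σ_{i=1}^n min_{y ∈ S} |y − p_i|. In other words, the objective λ·|S| + Σ_{i=100}^n min_{y∈S} |y − p_i| can always be optimized by choosing all backbone positions among the input y-coordinates. -/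
/-- For any finite nonempty index set `C` and values `v`, there is a data point `v j`
(`j ∈ C`) whose total L1 distance to all data points is at most that of any real `y`. -/
lemma median_lemma {ι : Type*} [DecidableEq ι] (v : ι → ℝ) (y : ℝ) :
    ∀ C : Finset ι, C.Nonempty →
      ∃ j ∈ C, ∑ i ∈ C, |v j - v i| ≤ ∑ i ∈ C, |y - v i| := by
  intro C
  induction C using Finset.strongInduction with
  | _ C ih =>
    intro hC
    obtain ⟨ia, hia, hmin⟩ := C.exists_min_image v hC
    obtain ⟨ib, hib, hmax⟩ := C.exists_max_image v hC
    by_cases hab : v ib ≤ v ia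
    · refine ⟨ia, hia, ?_⟩
      have hz : ∀ i ∈ C, |v ia - v i| = 0 := by
        intro i hi
        have h1 := hmin i hi
        have h2 := hmax i hi
        have : v i = v ia := le_antisymm (h2.trans hab) h1
        simp [this]
      calc ∑ i ∈ C, |v ia - v i| = 0 := Finset.sum_eq_zero hz
        _ ≤ _ := Finset.sum_nonneg (fun i _ => abs_nonneg _)
    · push_neg at hab
      have hne : ia ≠ ib := by
        intro h; rw [h] at hab; exact lt_irrefl _ hab
      have hibm : ib ∈ C.erase ia := Finset.mem_erase.mpr ⟨Ne.symm hne, hib⟩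
      have hsum : ∀ g : ι → ℝ,
          ∑ i ∈ C, g i = g ia + g ib + ∑ i ∈ (C.erase ia).erase ib, g i := by
        intro g
        rw [← Finset.add_sum_erase _ _ hia, ← Finset.add_sum_erase _ _ hibm]
        ring
      have hpair : ∀ z, v ia ≤ z → z ≤ v ib →
          |z - v ia| + |z - v ib| ≤ |y - v ia| + |y - v ib| := by
        intro z h1 h2
        have he : |z - v ia| + |z - v ib| = v ib - v ia := by
          rw [abs_of_nonneg (by linarith), abs_of_nonpos (by linarith)]; ring
        rw [he]
        have h3 := abs_sub_le (v ib) y (v ia)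
        have h4 : |v ib - v ia| = v ib - v ia := abs_of_nonneg (by linarith)
        have h5 : |v ib - y| = |y - v ib| := abs_sub_comm _ _
        rw [h4, h5] at h3
        linarith
      rcases ((C.erase ia).erase ib).eq_empty_or_nonempty with he | hne'
      · refine ⟨ia, hia, ?_⟩
        rw [hsum, hsum, he]
        simp only [Finset.sum_empty, add_zero, sub_self, abs_zero, zero_add]
        have := hpair (v ia) le_rfl hab.le
        have hz : |v ia - v ia| = 0 := by simp
        rw [hz, zero_add] at this
        exact this
      · have hss : (C.erase ia).erase ib ⊂ C :=
          lt_of_le_of_lt (Finset.erase_subset _ _) (Finset.erase_ssubset hia)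
        obtain ⟨j, hj, hjle⟩ := ih _ hss hne'
        have hjC : j ∈ C := Finset.mem_of_mem_erase (Finset.mem_of_mem_erase hj)
        refine ⟨j, hjC, ?_⟩
        rw [hsum, hsum]
        have h1 := hpair (v j) (hmin j hjC) (hmax j hjC)
        linarith

/-- Let `p 0 > p 1 > ⋯ > p (n-1)` be real numbers (`n ≥ 1`), let `λ ≥ 0`, and let `S` be any
nonempty finite set of reals.  Then there is a nonempty `S' ⊆ {p 0, …, p (n-1)}` with
`|S'| ≤ |S|` such that
`λ·|S'| + ∑ i, min_{y ∈ S'} |y − p i| ≤ λ·|S| + ∑ i, min_{y ∈ S} |y − p i|`;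
i.e. the objective can always be optimized by choosing all backbone positions among the
input `y`-coordinates. -/
theorem stmt5 (n : ℕ) (hn : 0 < n) (p : Fin n → ℝ) (hp : StrictAnti p)
    (lam : ℝ) (hlam : 0 ≤ lam)
    (S : Finset ℝ) (hS : S.Nonempty) :
    ∃ (S' : Finset ℝ) (hS' : S'.Nonempty),
      ↑S' ⊆ Set.range p ∧ S'.card ≤ S.card ∧
      lam * S'.card + ∑ i : Fin n, S'.inf' hS' (fun y => |y - p i|) ≤
        lam * S.card + ∑ i : Fin n, S.inf' hS (fun y => |y - p i|) := by
  classical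
  -- choose, for each i, a nearest point a i ∈ S
  have hchoice : ∀ i : Fin n, ∃ y, y ∈ S ∧ S.inf' hS (fun z => |z - p i|) = |y - p i| := by
    intro i
    obtain ⟨y, hy, h⟩ := S.exists_mem_eq_inf' hS (fun z => |z - p i|)
    exact ⟨y, hy, h⟩
  choose a ha hinf using hchoice
  -- clusters
  set C : ℝ → Finset (Fin n) := fun y => Finset.univ.filter (fun i => a i = y) with hC
  set T : Finset ℝ := S.filter (fun y => (C y).Nonempty) with hT
  have hTa : ∀ i : Fin n, a i ∈ T := by
    intro i
    exact Finset.mem_filter.mpr ⟨ha i, ⟨i, Finset.mem_filter.mpr ⟨Finset.mem_univ i, rfl⟩⟩⟩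
  have hTne : T.Nonempty := ⟨a ⟨0, hn⟩, hTa _⟩
  -- median representative of each cluster
  have hmed : ∀ y : ℝ, ∃ j : Fin n, y ∈ T →
      ∑ i ∈ C y, |p j - p i| ≤ ∑ i ∈ C y, |y - p i| := by
    intro y
    by_cases hy : y ∈ T
    · have hCy : (C y).Nonempty := (Finset.mem_filter.mp hy).2
      obtain ⟨j, _, hle⟩ := median_lemma p y (C y) hCy
      exact ⟨j, fun _ => hle⟩
    · exact ⟨⟨0, hn⟩, fun h => absurd h hy⟩
  choose m hm using hmed
  refine ⟨T.image (fun y => p (m y)), hTne.image _, ?_, ?_, ?_⟩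
  · intro x hx
    simp only [Finset.coe_image, Set.mem_image, Finset.mem_coe] at hx
    obtain ⟨y, _, rfl⟩ := hx
    exact ⟨m y, rfl⟩
  · exact le_trans Finset.card_image_le (Finset.card_filter_le S _)
  · have hcard : (((T.image (fun y => p (m y))).card : ℝ)) ≤ (S.card : ℝ) := by
      exact_mod_cast le_trans Finset.card_image_le (Finset.card_filter_le S _)
    have h1 : lam * ((T.image (fun y => p (m y))).card : ℝ) ≤ lam * (S.card : ℝ) :=
      mul_le_mul_of_nonneg_left hcard hlam
    have hfib : ∀ g : Fin n → ℝ,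
        ∑ y ∈ T, ∑ i ∈ C y, g i = ∑ i : Fin n, g i := by
      intro g
      exact Finset.sum_fiberwise_of_maps_to (fun i _ => hTa i) g
    have h2 : ∑ i : Fin n, (T.image (fun y => p (m y))).inf' (hTne.image _) (fun y => |y - p i|)
        ≤ ∑ i : Fin n, S.inf' hS (fun y => |y - p i|) := by
      calc ∑ i : Fin n, (T.image (fun y => p (m y))).inf' (hTne.image _) (fun y => |y - p i|)
          ≤ ∑ i : Fin n, |p (m (a i)) - p i| := by
            refine Finset.sum_le_sum (fun i _ => ?_)
            exact Finset.inf'_le _ (Finset.mem_image_of_mem _ (hTa i))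
        _ = ∑ y ∈ T, ∑ i ∈ C y, |p (m (a i)) - p i| := (hfib _).symm
        _ = ∑ y ∈ T, ∑ i ∈ C y, |p (m y) - p i| := by
            refine Finset.sum_congr rfl (fun y _ => Finset.sum_congr rfl (fun i hi => ?_))
            have : a i = y := (Finset.mem_filter.mp hi).2
            rw [this]
        _ ≤ ∑ y ∈ T, ∑ i ∈ C y, |y - p i| :=
            Finset.sum_le_sum (fun y hy => hm y hy)
        _ = ∑ y ∈ T, ∑ i ∈ C y, |a i - p i| := by
            refine Finset.sum_congr rfl (fun y _ => Finset.sum_congr rfl (fun i hi => ?_))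
            have : a i = y := (Finset.mem_filter.mp hi).2
            rw [this]
        _ = ∑ i : Fin n, |a i - p i| := hfib _
        _ = ∑ i : Fin n, S.inf' hS (fun y => |y - p i|) := by
            exact Finset.sum_congr rfl (fun i _ => (hinf i).symm)
    linarith
end

section
/- Let a crossing-free finite-backbone labeling of P be given, let (y_1, y_2) be an open interval containing no y-coordinate of a point of P, let B be the set of labels ℓ with y(ℓ) ∈ (y_1, y_2), and let b* ∈ B be a label with minimal left endpoint left(b*) among B. Then every label b' ∈ B with y(b') > y(b*) has all of its assigned points above the interval (i.e., y(p) ≥ y_2 for every p with ℓ(p) = b'), and every label b'' ∈ B with y(b'') < y(b*) has all of its assigned points below the interval (i.e., y(p) ≤ y_1 for every p with ℓ(p) = b''). -/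
/-- In a crossing-free finite-backbone labeling (points with distinct `x`- and
`y`-coordinates, all left of the boundary `x = W`; labels `Lb` with distinct backbone
`y`-coordinates `y`, distinct from point `y`-coordinates; color-preserving assignment `f`
hitting every label; `leftEnd ℓ = min {xp p : f p = ℓ}`; a point `p` and a label
`ℓ' ≠ f p` cross iff `y ℓ'` is strictly between `yp p` and `y (f p)` and
`xp p ≥ leftEnd ℓ'`), let `(y₁, y₂)` be an open interval containing no point
`y`-coordinate, and let `bstar` be a label with backbone in `(y₁, y₂)` whose left endpoint
is minimal among all such labels.  Then every label `b'` with backbone in `(y₁, y₂)` above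
`bstar` has all its points above the interval, and every label `b''` with backbone in
`(y₁, y₂)` below `bstar` has all its points below the interval. -/
theorem stmt10 {ι Lb C : Type*} [Fintype ι] [Fintype Lb]
    (xp yp : ι → ℝ) (hxp : Function.Injective xp) (hyp : Function.Injective yp)
    (c : ι → C) (W : ℝ) (hW : ∀ p : ι, xp p < W)
    (y : Lb → ℝ) (hy : Function.Injective y)
    (hdisj : ∀ (ℓ : Lb) (p : ι), y ℓ ≠ yp p)
    (col : Lb → C) (f : ι → Lb)
    (hcol : ∀ p : ι, col (f p) = c p)
    (hsurj : Function.Surjective f)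
    (leftEnd : Lb → ℝ)
    (hleft : ∀ ℓ : Lb, IsLeast {x : ℝ | ∃ p : ι, f p = ℓ ∧ xp p = x} (leftEnd ℓ))
    (hcf : ∀ (p : ι) (ℓ' : Lb), ℓ' ≠ f p →
      ¬ (min (yp p) (y (f p)) < y ℓ' ∧ y ℓ' < max (yp p) (y (f p)) ∧ leftEnd ℓ' ≤ xp p))
    (y₁ y₂ : ℝ) (h12 : y₁ < y₂)
    (hgap : ∀ p : ι, yp p ∉ Set.Ioo y₁ y₂)
    (bstar : Lb) (hbstar : y bstar ∈ Set.Ioo y₁ y₂)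
    (hmin : ∀ b : Lb, y b ∈ Set.Ioo y₁ y₂ → leftEnd bstar ≤ leftEnd b) :
    (∀ b' : Lb, y b' ∈ Set.Ioo y₁ y₂ → y bstar < y b' →
        ∀ p : ι, f p = b' → y₂ ≤ yp p) ∧
    (∀ b'' : Lb, y b'' ∈ Set.Ioo y₁ y₂ → y b'' < y bstar →
        ∀ p : ι, f p = b'' → yp p ≤ y₁) := by
  constructor
  · intro b' hb' hlt p hp
    by_contra h
    push_neg at h
    have hle : yp p ≤ y₁ := by
      rcases (lt_or_ge y₁ (yp p)) with h1 | h1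
      · exact absurd ⟨h1, h⟩ (hgap p)
      · exact h1
    have hne : bstar ≠ f p := by
      rw [hp]; intro he; exact absurd (congrArg y he) (ne_of_lt hlt)
    refine hcf p bstar hne ⟨?_, ?_, ?_⟩
    · rw [hp]
      exact lt_of_le_of_lt (min_le_left _ _) (lt_of_le_of_lt hle hbstar.1)
    · rw [hp]
      exact lt_of_lt_of_le hlt (le_max_right _ _)
    · exact le_trans (hmin b' hb') ((hleft b').2 ⟨p, hp, rfl⟩)
  · intro b'' hb'' hlt p hp
    by_contra h
    push_neg at h
    have hge : y₂ ≤ yp p := by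
      rcases (lt_or_ge (yp p) y₂) with h1 | h1
      · exact absurd ⟨h, h1⟩ (hgap p)
      · exact h1
    have hne : bstar ≠ f p := by
      rw [hp]; intro he; exact absurd (congrArg y he) (ne_of_gt hlt)
    refine hcf p bstar hne ⟨?_, ?_, ?_⟩
    · rw [hp]
      exact lt_of_le_of_lt (min_le_right _ _) hlt
    · rw [hp]
      exact lt_of_lt_of_le (lt_of_lt_of_le hbstar.2 hge) (le_max_left _ _)
    · exact le_trans (hmin b'' hb'') ((hleft b'').2 ⟨p, hp, rfl⟩)
end

section
/- Let M ≥ 1 and a > b be real numbers. Let the upper guard consist of the points u_t = (2t, a) for t = 1, …, M, all assigned to a label ℓ_u, and let the lower guard consist of the points v_t = (2t + 1, b) for t = 1, …, M, all assigned to a label ℓ_l ≠ ℓ_u, in a finite-backbone labeling. If both backbones lie above the upper guard points, i.e., y(ℓ_u) > a and y(ℓ_l) > a (with y(ℓ_u) ≠ y(ℓ_l)), then the number of crossings between these two leaders — pairs (p, ℓ') with p a guard point, ℓ' ∈ {ℓ_u, ℓ_l}, ℓ' ≠ ℓ(p), y(ℓ') strictly between y(p) and y(ℓ(p)), and x(p)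 ≥ left(ℓ') — is at least M − 1. -/
/-- guard-gadget counting step of the NP-hardness reduction.
The upper guard consists of the points `u t = (2t, a)`, `t = 1, …, M`, all assigned to a
label `ℓ_u` with backbone height `yu`, and the lower guard of the points
`v t = (2t + 1, b)`, `t = 1, …, M`, all assigned to a different label `ℓ_l` with backbone
height `yl ≠ yu`, where `a > b` and `M ≥ 1`.  The left endpoints of the two backbones are
`Lu = min {2t : 1 ≤ t ≤ M}` and `Ll = min {2t + 1 : 1 ≤ t ≤ M}`; a guard point `p`
crosses the other backbone (at height `h`, left endpoint `E`) iff `h` lies strictly between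
the `y`-coordinate of `p` and the height of `p`'s own backbone and `x(p) ≥ E`.  If both
backbones lie above the upper guard points (`yu > a` and `yl > a`), then there are at
least `M − 1` crossings between the two leaders. -/
theorem stmt12 (M : ℕ) (hM : 1 ≤ M) (a b : ℝ) (hab : b < a)
    (yu yl : ℝ) (hyu : a < yu) (hyl : a < yl) (hne : yu ≠ yl)
    (Lu Ll : ℝ)
    (hLu : IsLeast {x : ℝ | ∃ t ∈ Finset.Icc 1 M, x = 2 * (t : ℝ)} Lu)
    (hLl : IsLeast {x : ℝ | ∃ t ∈ Finset.Icc 1 M, x = 2 * (t : ℝ) + 1} Ll) :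
    M - 1 ≤
      ((Finset.Icc 1 M).filter (fun t : ℕ =>
          (min a yu < yl ∧ yl < max a yu) ∧ Ll ≤ 2 * (t : ℝ))).card +
      ((Finset.Icc 1 M).filter (fun t : ℕ =>
          (min b yl < yu ∧ yu < max b yl) ∧ Lu ≤ 2 * (t : ℝ) + 1)).card := by
  have hLu2 : Lu = 2 := by
    have h1 : Lu ≤ 2 := hLu.2 (show (2:ℝ) ∈ _ from ⟨1, by simp [hM], by norm_num⟩)
    obtain ⟨t, ht, rfl⟩ := hLu.1
    have ht1 : (1 : ℝ) ≤ t := by exact_mod_cast (Finset.mem_Icc.mp ht).1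
    linarith
  have hLl3 : Ll = 3 := by
    have h1 : Ll ≤ 3 :=
      hLl.2 (show (3:ℝ) ∈ _ from ⟨1, by simp [hM], by norm_num⟩)
    obtain ⟨t, ht, rfl⟩ := hLl.1
    have ht1 : (1 : ℝ) ≤ t := by exact_mod_cast (Finset.mem_Icc.mp ht).1
    linarith
  rcases lt_or_gt_of_ne hne with h | h
  · -- yu < yl : each lower-guard point crosses
    have hpred : ∀ t ∈ Finset.Icc 1 M,
        (min b yl < yu ∧ yu < max b yl) ∧ Lu ≤ 2 * (t : ℝ) + 1 := by
      intro t ht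
      have ht1 : (1 : ℝ) ≤ t := by exact_mod_cast (Finset.mem_Icc.mp ht).1
      refine ⟨⟨?_, ?_⟩, ?_⟩
      · exact lt_of_le_of_lt (min_le_left _ _) (hab.trans hyu)
      · exact lt_of_lt_of_le h (le_max_right _ _)
      · rw [hLu2]; linarith
    rw [Finset.filter_true_of_mem hpred]
    simp [Nat.card_Icc]
    omega
  · -- yl < yu : lower-guard points with t ≥ 2 cross via first filter
    have hcard : (Finset.Icc 2 M).card ≤
        ((Finset.Icc 1 M).filter (fun t : ℕ =>
          (min a yu < yl ∧ yl < max a yu) ∧ Ll ≤ 2 * (t : ℝ))).card := by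
      apply Finset.card_le_card
      intro t ht
      rw [Finset.mem_Icc] at ht
      have ht2 : (2 : ℝ) ≤ t := by exact_mod_cast ht.1
      refine Finset.mem_filter.mpr ⟨Finset.mem_Icc.mpr ⟨by omega, ht.2⟩, ⟨⟨?_, ?_⟩, ?_⟩⟩
      · exact lt_of_le_of_lt (min_le_left _ _) hyl
      · exact lt_of_lt_of_le h (le_max_right _ _)
      · rw [hLl3]; linarith
    have : (Finset.Icc 2 M).card = M - 1 := by rw [Nat.card_Icc]; omega
    omega
end
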